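/- Let f : 𝒳 → ℝ be nonnegative, monotone, and DR-submodular. Let C₁, …, C_λ be a partition of [d] and let K₁, …, K_λ ∈ ℕ with budgets k_j = K_j·δ; call x ∈ 𝒳 feasible if Σ_{i∈C_j} x_i ≤ k_j for every j ∈ [λ]. Let K = Σ_{j∈[λ]} K_j and define the constrained greedy sequence by x⁰ = 0 and, for t = 1, …, K, x^t = x^{t−1} + δe_{i_t} where i_t maximizes f(x^{t−1} + δe_i) over all coordinates i ∈ [d] such that x^{t−1} + δe_i is feasible. Then f(x^K) ≥ (1/2) · max{ f(y) : y ∈ 𝒳, y feasible }. -/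
import Mathlib


/-- `x` lies in the lattice `𝒳`: each coordinate is a nonnegative integer multiple of `δ`. -/
def InLattice {d : ℕ} (δ : ℝ) (x : Fin d → ℝ) : Prop := ∀ i, ∃ n : ℕ, x i = n * δ

/-- The `i`-th standard unit vector of `ℝ^d`. -/
def eVec {d : ℕ} (i : Fin d) : Fin d → ℝ := Pi.single i 1

lemma eVec_apply {d : ℕ} (i i' : Fin d) : eVec i i' = if i' = i then 1 else 0 := by
  simp [eVec, Pi.single_apply]

lemma add_eVec_apply {d : ℕ} (δ : ℝ) (x : Fin d → ℝ) (i i' : Fin d) :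
    (x + δ • eVec i) i' = x i' + (if i' = i then δ else 0) := by
  by_cases h : i' = i <;> simp [eVec_apply, h]

lemma inLattice_add {d : ℕ} {δ : ℝ} {x : Fin d → ℝ} (hx : InLattice δ x) (i : Fin d) :
    InLattice δ (x + δ • eVec i) := by
  intro i'
  obtain ⟨n, hn⟩ := hx i'
  rw [add_eVec_apply]
  by_cases h : i' = i
  · exact ⟨n + 1, by rw [if_pos h, hn]; push_cast; ring⟩
  · exact ⟨n, by rw [if_neg h, hn, add_zero]⟩

lemma le_add_eVec {d : ℕ} {δ : ℝ} (hδ : 0 ≤ δ) (x : Fin d → ℝ) (i : Fin d) :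
    x ≤ x + δ • eVec i := by
  intro i'
  rw [add_eVec_apply]
  by_cases h : i' = i
  · rw [if_pos h]; linarith
  · rw [if_neg h]; simp

/-- Greedy guarantee under partitioned budgets: for `f : 𝒳 → ℝ` nonnegative, monotone and
DR-submodular, and a partition `C₁, …, C_Λ` of `[d]` with budgets `k_j = K_j·δ`, the
constrained greedy sequence (always taking a feasible step of largest value, for
`K = Σ_j K_j` steps) satisfies `f(x^K) ≥ (1/2) · max{ f(y) : y ∈ 𝒳 feasible }`. -/
theorem lattice_greedy_partitioned_budget {d : ℕ} (hd : 1 ≤ d) (δ : ℝ) (hδ : 0 < δ)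
    (f : (Fin d → ℝ) → ℝ)
    (hnonneg : ∀ x : Fin d → ℝ, InLattice δ x → 0 ≤ f x)
    (hmono : ∀ x y : Fin d → ℝ, InLattice δ x → InLattice δ y → x ≤ y → f x ≤ f y)
    (hsub : ∀ x y : Fin d → ℝ, InLattice δ x → InLattice δ y → x ≤ y → ∀ i : Fin d,
      f (y + δ • eVec i) - f y ≤ f (x + δ • eVec i) - f x)
    (Λ : ℕ) (hΛ : 1 ≤ Λ) (C : Fin Λ → Finset (Fin d))
    (hdisj : ∀ j j' : Fin Λ, j ≠ j' → Disjoint (C j) (C j'))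
    (hcover : ∀ i : Fin d, ∃ j : Fin Λ, i ∈ C j)
    (Kb : Fin Λ → ℕ)
    (Feasible : (Fin d → ℝ) → Prop)
    (hFeasible : ∀ y, Feasible y ↔
      (InLattice δ y ∧ ∀ j : Fin Λ, (∑ i ∈ C j, y i) ≤ (Kb j : ℝ) * δ))
    (K : ℕ) (hK : K = ∑ j : Fin Λ, Kb j)
    (x : ℕ → Fin d → ℝ) (hx0 : x 0 = 0)
    (hgreedy : ∀ t < K, ∃ i : Fin d,
      Feasible (x t + δ • eVec i) ∧
      (∀ i' : Fin d, Feasible (x t + δ • eVec i') →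
        f (x t + δ • eVec i') ≤ f (x t + δ • eVec i)) ∧
      x (t + 1) = x t + δ • eVec i) :
    ∀ y : Fin d → ℝ, Feasible y → (1 / 2 : ℝ) * f y ≤ f (x K) := by
  intro y hy
  -- total greedy index function
  have hgreedy' : ∀ t : ℕ, ∃ i : Fin d, t < K →
      (Feasible (x t + δ • eVec i) ∧
      (∀ i' : Fin d, Feasible (x t + δ • eVec i') →
        f (x t + δ • eVec i') ≤ f (x t + δ • eVec i)) ∧
      x (t + 1) = x t + δ • eVec i) := by
    intro t
    by_cases h : t < K
    · obtain ⟨i, h1, h2, h3⟩ := hgreedy t h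
      exact ⟨i, fun _ => ⟨h1, h2, h3⟩⟩
    · exact ⟨⟨0, hd⟩, fun h' => absurd h' h⟩
  choose I hI using hgreedy'
  -- the part of each coordinate
  choose part hpartmem using hcover
  have hpart_unique : ∀ (i : Fin d) (j : Fin Λ), i ∈ C j → part i = j := by
    intro i j hij
    by_contra h
    exact Finset.disjoint_left.mp (hdisj _ _ h) (hpartmem i) hij
  -- step counts per part
  obtain ⟨cnt, hcnt⟩ : ∃ cnt : Fin Λ → ℕ → ℕ, ∀ j t,
      cnt j t = ((Finset.range t).filter (fun s => I s ∈ C j)).card :=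
    ⟨_, fun _ _ => rfl⟩
  have cnt_zero : ∀ j, cnt j 0 = 0 := by intro j; rw [hcnt]; simp
  have cnt_succ : ∀ j t, cnt j (t + 1) = cnt j t + (if I t ∈ C j then 1 else 0) := by
    intro j t
    rw [hcnt, hcnt, Finset.range_add_one, Finset.filter_insert]
    split
    · rw [Finset.card_insert_of_notMem (by simp)]
    · simp
  -- lattice membership of x t
  have hlat0 : InLattice δ (0 : Fin d → ℝ) := fun i => ⟨0, by simp⟩
  have hlat : ∀ t, t ≤ K → InLattice δ (x t) := by
    intro t
    induction t with
    | zero => intro _; rw [hx0]; exact hlat0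
    | succ t ih =>
      intro ht
      have htK : t < K := ht
      obtain ⟨_, _, hstep⟩ := hI t htK
      rw [hstep]; exact inLattice_add (ih htK.le) _
  -- monotonicity of the chain
  have hxle : ∀ s t, s ≤ t → t ≤ K → x s ≤ x t := by
    intro s t hst htK
    induction t with
    | zero => rw [Nat.le_zero.mp hst]
    | succ t ih =>
      have htK' : t < K := htK
      obtain ⟨_, _, hstep⟩ := hI t htK'
      rcases Nat.lt_or_ge s (t + 1) with h | h
      · calc x s ≤ x t := ih (Nat.lt_succ_iff.mp h) htK'.le
          _ ≤ x (t + 1) := by rw [hstep]; exact le_add_eVec hδ.le _ _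
      · rw [Nat.le_antisymm hst h]
  -- budget occupancy
  have hsum : ∀ t, t ≤ K → ∀ j, (∑ i ∈ C j, x t i) = (cnt j t : ℝ) * δ := by
    intro t
    induction t with
    | zero => intro _ j; rw [hx0]; simp [cnt_zero]
    | succ t ih =>
      intro ht j
      have htK : t < K := ht
      obtain ⟨_, _, hstep⟩ := hI t htK
      have h1 : ∑ i ∈ C j, x (t+1) i
          = (∑ i ∈ C j, x t i) + ∑ i ∈ C j, (if i = I t then δ else 0) := by
        rw [← Finset.sum_add_distrib]
        refine Finset.sum_congr rfl fun i _ => ?_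
        rw [hstep, add_eVec_apply]
      rw [h1, ih htK.le j, Finset.sum_ite_eq' (C j) (I t) (fun _ => δ), cnt_succ]
      by_cases hmm : I t ∈ C j
      · rw [if_pos hmm, if_pos hmm]; push_cast; ring
      · rw [if_neg hmm, if_neg hmm]; push_cast; ring
  -- budget bound on counts
  have hcnt_le : ∀ t, t ≤ K → ∀ j, cnt j t ≤ Kb j := by
    intro t ht j
    cases t with
    | zero => simp [cnt_zero]
    | succ t =>
      have htK : t < K := ht
      obtain ⟨hfeas, _, hstep⟩ := hI t htK
      rw [← hstep] at hfeas
      have hb := ((hFeasible _).mp hfeas).2 j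
      rw [hsum (t+1) ht j] at hb
      have := le_of_mul_le_mul_right hb hδ
      exact_mod_cast this
  -- at the end, all budgets are exhausted
  have hone : ∀ s : ℕ, ∑ j : Fin Λ, (if I s ∈ C j then 1 else 0) = 1 := by
    intro s
    rw [Finset.sum_eq_single (part (I s))]
    · simp [hpartmem]
    · intro j _ hne
      rw [if_neg]
      intro h
      exact hne ((hpart_unique _ _ h) ▸ rfl)
    · simp
  have hsumcnt : ∑ j : Fin Λ, cnt j K = K := by
    have h1 : ∀ j : Fin Λ, cnt j K = ∑ s ∈ Finset.range K, (if I s ∈ C j then 1 else 0) := by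
      intro j
      rw [hcnt, Finset.card_filter]
    calc ∑ j : Fin Λ, cnt j K
        = ∑ j : Fin Λ, ∑ s ∈ Finset.range K, (if I s ∈ C j then 1 else 0) :=
          Finset.sum_congr rfl fun j _ => h1 j
      _ = ∑ s ∈ Finset.range K, ∑ j : Fin Λ, (if I s ∈ C j then 1 else 0) :=
          Finset.sum_comm
      _ = ∑ s ∈ Finset.range K, 1 := Finset.sum_congr rfl fun s _ => hone s
      _ = K := by simp
  have hcntK : ∀ j, cnt j K = Kb j := by
    have h := (Finset.sum_eq_sum_iff_of_le
      (s := Finset.univ) (f := fun j => cnt j K) (g := Kb)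
      (fun j _ => hcnt_le K le_rfl j)).mp (by rw [hsumcnt, hK])
    intro j
    exact h j (Finset.mem_univ j)
  -- greedy gains are nonnegative
  have hg : ∀ t, t < K → f (x t) ≤ f (x (t+1)) := by
    intro t htK
    obtain ⟨_, _, hstep⟩ := hI t htK
    refine hmono _ _ (hlat t htK.le) (hlat (t+1) htK) ?_
    rw [hstep]; exact le_add_eVec hδ.le _ _
  -- decompose y and x K into lattice coefficients
  obtain ⟨hylat, hybud⟩ := (hFeasible y).mp hy
  choose a ha using hylat
  choose b hb using hlat K le_rfl
  obtain ⟨m, hm⟩ : ∃ m : Fin d → ℕ, ∀ i, m i = a i - b i := ⟨_, fun _ => rfl⟩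
  have hm_bound : ∀ j, (∑ i ∈ C j, m i) ≤ Kb j := by
    intro j
    have h1 : ((∑ i ∈ C j, m i : ℕ) : ℝ) * δ ≤ (Kb j : ℝ) * δ := by
      have h2 : ∀ i ∈ C j, (m i : ℝ) * δ ≤ y i := by
        intro i _
        rw [ha i]
        have h3 : (m i : ℝ) ≤ (a i : ℝ) := by
          have : m i ≤ a i := by rw [hm]; omega
          exact_mod_cast this
        exact mul_le_mul_of_nonneg_right h3 hδ.le
      calc ((∑ i ∈ C j, m i : ℕ) : ℝ) * δ = ∑ i ∈ C j, (m i : ℝ) * δ := by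
            push_cast; rw [Finset.sum_mul]
        _ ≤ ∑ i ∈ C j, y i := Finset.sum_le_sum h2
        _ ≤ (Kb j : ℝ) * δ := hybud j
    exact_mod_cast le_of_mul_le_mul_right h1 hδ
  -- offsets within parts
  obtain ⟨o, ho⟩ : ∃ o : Fin d → ℕ, ∀ i,
      o i = ∑ i' ∈ (C (part i)).filter (fun k => k < i), m i' := ⟨_, fun _ => rfl⟩
  have ho_lt : ∀ i i' : Fin d, part i = part i' → i < i' → o i + m i ≤ o i' := by
    intro i i' hpp hii
    have hnot : i ∉ (C (part i')).filter (fun k => k < i) := by simp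
    have hsub' : insert i ((C (part i')).filter (fun k => k < i))
        ⊆ (C (part i')).filter (fun k => k < i') := by
      intro k hk
      rcases Finset.mem_insert.mp hk with rfl | hk
      · exact Finset.mem_filter.mpr ⟨by rw [← hpp]; exact hpartmem k, hii⟩
      · rcases Finset.mem_filter.mp hk with ⟨h1, h2⟩
        exact Finset.mem_filter.mpr ⟨h1, h2.trans hii⟩
    calc o i + m i = m i + ∑ i'' ∈ (C (part i')).filter (fun k => k < i), m i'' := by
          rw [ho i, hpp]; exact add_comm _ _
      _ = ∑ i'' ∈ insert i ((C (part i')).filter (fun k => k < i)), m i'' :=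
          (Finset.sum_insert hnot).symm
      _ ≤ ∑ i'' ∈ (C (part i')).filter (fun k => k < i'), m i'' :=
          Finset.sum_le_sum_of_subset hsub'
      _ = o i' := (ho i').symm
  have ho_bound : ∀ i, o i + m i ≤ Kb (part i) := by
    intro i
    have hnot : i ∉ (C (part i)).filter (fun k => k < i) := by simp
    have hsub' : insert i ((C (part i)).filter (fun k => k < i)) ⊆ C (part i) := by
      intro k hk
      rcases Finset.mem_insert.mp hk with rfl | hk
      · exact hpartmem _
      · exact (Finset.mem_filter.mp hk).1
    calc o i + m i = ∑ i'' ∈ insert i ((C (part i)).filter (fun k => k < i)), m i'' := by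
          rw [Finset.sum_insert hnot, ho i]; exact add_comm _ _
      _ ≤ ∑ i'' ∈ C (part i), m i'' := Finset.sum_le_sum_of_subset hsub'
      _ ≤ Kb (part i) := hm_bound _
  -- the interpolation sequence from x K to (x K) ⊔ y
  obtain ⟨w, hw⟩ : ∃ w : ℕ → Fin d → ℝ, ∀ t i,
      w t i = x K i + (min (m i) (cnt (part i) t - o i) : ℕ) * δ := ⟨_, fun _ _ => rfl⟩
  have hwlat : ∀ t, InLattice δ (w t) := by
    intro t i
    exact ⟨b i + min (m i) (cnt (part i) t - o i), by
      rw [hw, hb i]; push_cast; ring⟩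
  have hw0 : w 0 = x K := by
    funext i
    rw [hw, cnt_zero]
    simp
  have hxKw : ∀ t, x K ≤ w t := by
    intro t i
    rw [hw]
    have : (0:ℝ) ≤ (min (m i) (cnt (part i) t - o i) : ℕ) * δ := by positivity
    linarith
  have hyw : y ≤ w K := by
    intro i
    have h1 : min (m i) (cnt (part i) K - o i) = m i := by
      have h2 := ho_bound i
      rw [hcntK]
      omega
    rw [hw, h1, ha i, hb i]
    have h2 : (a i : ℝ) ≤ (b i : ℝ) + (m i : ℝ) := by
      have : a i ≤ b i + m i := by rw [hm]; omega
      exact_mod_cast this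
    nlinarith [hδ.le]
  -- the key step bound
  have hstep_w : ∀ t, t < K → f (w (t+1)) ≤ f (w t) + (f (x (t+1)) - f (x t)) := by
    intro t htK
    obtain ⟨hfeas, hopt, hstep⟩ := hI t htK
    have hcnt_eq : ∀ j, j ≠ part (I t) → cnt j (t+1) = cnt j t := by
      intro j hj
      rw [cnt_succ, if_neg, add_zero]
      intro h
      exact hj (hpart_unique _ _ h).symm
    have hcnt_j0 : cnt (part (I t)) (t+1) = cnt (part (I t)) t + 1 := by
      rw [cnt_succ, if_pos (hpartmem (I t))]
    have hc1 : cnt (part (I t)) t + 1 ≤ Kb (part (I t)) := by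
      rw [← hcnt_j0]; exact hcnt_le (t+1) htK (part (I t))
    by_cases hex : ∃ i : Fin d, part i = part (I t) ∧
        o i ≤ cnt (part (I t)) t ∧ cnt (part (I t)) t - o i < m i
    · obtain ⟨istar, hpi, h1, h2⟩ := hex
      have hwstep : w (t+1) = w t + δ • eVec istar := by
        funext i
        rw [add_eVec_apply, hw, hw]
        by_cases hii : i = istar
        · subst hii
          rw [if_pos rfl, hpi, hcnt_j0]
          have h3 : min (m i) (cnt (part (I t)) t + 1 - o i)
              = min (m i) (cnt (part (I t)) t - o i) + 1 := by omega
          rw [h3]; push_cast; ring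
        · rw [if_neg hii, add_zero]
          by_cases hpi' : part i = part (I t)
          · rw [hpi', hcnt_j0]
            rcases lt_or_gt_of_ne hii with hlt | hgt
            · have h4 := ho_lt i istar (hpi'.trans hpi.symm) hlt
              have h5 : min (m i) (cnt (part (I t)) t + 1 - o i)
                  = min (m i) (cnt (part (I t)) t - o i) := by omega
              rw [h5]
            · have h4 := ho_lt istar i (hpi.trans hpi'.symm) hgt
              have h5 : min (m i) (cnt (part (I t)) t + 1 - o i)
                  = min (m i) (cnt (part (I t)) t - o i) := by omega
              rw [h5]
          · rw [hcnt_eq _ hpi']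
      -- taking istar at step t would have been feasible
      have hfeas' : Feasible (x t + δ • eVec istar) := by
        rw [hFeasible]
        refine ⟨inLattice_add (hlat t htK.le) _, fun j => ?_⟩
        have h6 : ∑ i ∈ C j, (x t + δ • eVec istar) i
            = (∑ i ∈ C j, x t i) + ∑ i ∈ C j, (if i = istar then δ else 0) := by
          rw [← Finset.sum_add_distrib]
          exact Finset.sum_congr rfl fun i _ => add_eVec_apply δ (x t) istar i
        rw [h6, hsum t htK.le j, Finset.sum_ite_eq' (C j) istar (fun _ => δ)]
        by_cases hmem : istar ∈ C j
        · have hjj : j = part (I t) := by rw [← hpart_unique _ _ hmem, hpi]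
          subst hjj
          rw [if_pos hmem]
          have h7 : ((cnt (part (I t)) t : ℝ) + 1) ≤ (Kb (part (I t)) : ℝ) := by
            exact_mod_cast hc1
          nlinarith [hδ.le]
        · rw [if_neg hmem, add_zero]
          have h8 : ((cnt j t : ℕ) : ℝ) ≤ (Kb j : ℝ) := by
            exact_mod_cast hcnt_le t htK.le j
          exact mul_le_mul_of_nonneg_right h8 hδ.le
      have hxtw : x t ≤ w t := le_trans (hxle t K htK.le le_rfl) (hxKw t)
      have hDR := hsub (x t) (w t) (hlat t htK.le) (hwlat t) hxtw istar
      have hopt' := hopt istar hfeas'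
      rw [hwstep, hstep]
      linarith
    · have hweq : w (t+1) = w t := by
        funext i
        rw [hw, hw]
        by_cases hpi' : part i = part (I t)
        · rw [hpi', hcnt_j0]
          have h9 : ¬(o i ≤ cnt (part (I t)) t ∧ cnt (part (I t)) t - o i < m i) :=
            fun hc => hex ⟨i, hpi', hc.1, hc.2⟩
          have h10 : min (m i) (cnt (part (I t)) t + 1 - o i)
              = min (m i) (cnt (part (I t)) t - o i) := by omega
          rw [h10]
        · rw [hcnt_eq _ hpi']
      rw [hweq]
      have := hg t htK
      linarith
  -- telescoping
  have hfinal : ∀ t, t ≤ K → f (w t) ≤ f (x K) + (f (x t) - f (x 0)) := by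
    intro t
    induction t with
    | zero => intro _; rw [hw0]; simp
    | succ t ih =>
      intro ht
      have htK : t < K := ht
      have h1 := hstep_w t htK
      have h2 := ih htK.le
      linarith
  have h1 : f y ≤ f (w K) := hmono y (w K) (fun i => ⟨a i, ha i⟩) (hwlat K) hyw
  have h2 := hfinal K le_rfl
  have h0 : 0 ≤ f (x 0) := by rw [hx0]; exact hnonneg _ hlat0
  linarith
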